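/- arXiv:2602.10286 — 5 statements merged into one kernel-verified Lean document; each statement's English description precedes it below -/
import Mathlib

section
/- If P satisfies positive–negative conditional independence with strictly positive conditionals p_+(y|x) > 0 and p_−(y|x) > 0 for all x, y, then the CPRD ω_P is representable by a Bradley–Terry model, and the score function r(x,y) = log(p_+(y|x)/p_−(y|x)) realizes it: for all x with P_X(x) > 0 and all y ≠ y', ω_P(y ≻ y' | x) = σ(r(x,y) − r(x,y')). -/
/-- The sigmoid function σ(t) = 1/(1+e^{-t}). -/
noncomputable def sigmoid (t : ℝ) : ℝ := 1 / (1 + Real.exp (-t))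

theorem sigmoid_log_sub_log {a b : ℝ} (ha : 0 < a) (hb : 0 < b) :
    sigmoid (Real.log a - Real.log b) = a / (a + b) := by
  rw [sigmoid, ← Real.log_div ha.ne' hb.ne', ← Real.log_inv, Real.exp_log (by positivity), inv_div]
  field_simp

theorem mul_mul_div_add_swap_eq_sigmoid {c a b a' b' : ℝ} (hc : c ≠ 0)
    (ha : 0 < a) (hb : 0 < b) (ha' : 0 < a') (hb' : 0 < b') :
    c * a * b' / (c * a * b' + c * a' * b) =
      sigmoid (Real.log (a / b) - Real.log (a' / b')) := by
  have hlog : Real.log (a / b) - Real.log (a' / b') =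
      Real.log (a * b') - Real.log (a' * b) := by
    rw [Real.log_div ha.ne' hb.ne', Real.log_div ha'.ne' hb'.ne',
      Real.log_mul ha.ne' hb'.ne', Real.log_mul ha'.ne' hb.ne']
    ring
  rw [hlog, sigmoid_log_sub_log (mul_pos ha hb') (mul_pos ha' hb), mul_assoc, mul_assoc,
    ← mul_add, mul_div_mul_left _ _ hc]

theorem stmt_2_general {X Y : Type*}
    (P : X → Y → Y → ℝ) (PX : X → ℝ) (pplus pminus : X → Y → ℝ)
    (hp0 : ∀ x y, 0 < pplus x y) (hm0 : ∀ x y, 0 < pminus x y)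
    (hfact : ∀ x yp ym, P x yp ym = PX x * pplus x yp * pminus x ym) :
    (∃ r : X → Y → ℝ, ∀ x : X, ∀ y y' : Y, y ≠ y' → 0 < P x y y' + P x y' y →
        P x y y' / (P x y y' + P x y' y) = sigmoid (r x y - r x y')) ∧
    (∀ x : X, 0 < PX x → ∀ y y' : Y, y ≠ y' →
        P x y y' / (P x y y' + P x y' y) =
          sigmoid (Real.log (pplus x y / pminus x y) - Real.log (pplus x y' / pminus x y'))) := by
  have cprd_eq_sigmoid : ∀ x, PX x ≠ 0 → ∀ y y', P x y y' / (P x y y' + P x y' y) =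
      sigmoid (Real.log (pplus x y / pminus x y) - Real.log (pplus x y' / pminus x y')) :=
    fun x hx y y' => by
      rw [hfact, hfact]
      exact mul_mul_div_add_swap_eq_sigmoid hx (hp0 x y) (hm0 x y) (hp0 x y') (hm0 x y')
  refine ⟨⟨fun x y => Real.log (pplus x y / pminus x y), fun x y y' _ hpos => cprd_eq_sigmoid x ?_ y y'⟩,
    fun x hx y y' _ => cprd_eq_sigmoid x hx.ne' y y'⟩
  -- a context of `P_X`-mass zero gives both orientations mass zero
  intro hx
  simp [hfact, hx] at hpos

/-- If P satisfies positive–negative conditional independence with strictly positive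
conditionals, then the CPRD ω_P is representable by a Bradley–Terry model, and the score
function r(x,y) = log(p₊(y|x)/p₋(y|x)) realizes it. -/
theorem stmt_2 {X Y : Type*} [Fintype X] [Fintype Y] [Nonempty X] [Nonempty Y]
    (P : X → Y → Y → ℝ) (PX : X → ℝ) (pplus pminus : X → Y → ℝ)
    (hPX0 : ∀ x, 0 ≤ PX x) (hPX1 : ∑ x, PX x = 1)
    (hp0 : ∀ x y, 0 < pplus x y) (hm0 : ∀ x y, 0 < pminus x y)
    (hp1 : ∀ x, ∑ y, pplus x y = 1) (hm1 : ∀ x, ∑ y, pminus x y = 1)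
    (hfact : ∀ x yp ym, P x yp ym = PX x * pplus x yp * pminus x ym) :
    (∃ r : X → Y → ℝ, ∀ x : X, ∀ y y' : Y, y ≠ y' → 0 < P x y y' + P x y' y →
        P x y y' / (P x y y' + P x y' y) = sigmoid (r x y - r x y')) ∧
    (∀ x : X, 0 < PX x → ∀ y y' : Y, y ≠ y' →
        P x y y' / (P x y y' + P x y' y) =
          sigmoid (Real.log (pplus x y / pminus x y) - Real.log (pplus x y' / pminus x y'))) :=
  stmt_2_general P PX pplus pminus hp0 hm0 hfact
end

section
/- If the CPRD ω_P is representable by a Bradley–Terry model, then there exists a distribution Q on 𝒳 × 𝒴 × 𝒴 satisfying positive–negative conditional independence with strictly positive conditionals such that for all x ∈ 𝒳 and all y ≠ y' with P(x,y,y') + P(x,y',y) > 0, one has ω_Q(y ≻ y' | x) = ω_P(y ≻ y' | x). -/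
/-! Given Bradley–Terry scores `r`, take `Q_X` uniform, `q₊(·|x) ∝ exp (r x · / 2)` and
`q₋(·|x) ∝ exp (-r x · / 2)`. Then `Q(x,y,y') ∝ exp ((r x y - r x y') / 2)`, with a constant
symmetric in `y, y'`, so `ω_Q(y ≻ y' | x) = e^{t/2} / (e^{t/2} + e^{-t/2}) = σ(t)` for
`t = r x y - r x y'`, which is `ω_P(y ≻ y' | x)` by assumption. -/

open Finset

noncomputable def softmax {Y : Type*} [Fintype Y] (s : Y → ℝ) (y : Y) : ℝ :=
  Real.exp (s y) / ∑ z, Real.exp (s z)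

section Softmax

variable {Y : Type*} [Fintype Y]

lemma sum_exp_pos [Nonempty Y] (s : Y → ℝ) : 0 < ∑ z, Real.exp (s z) :=
  sum_pos (fun z _ => Real.exp_pos (s z)) univ_nonempty

lemma softmax_pos [Nonempty Y] (s : Y → ℝ) (y : Y) : 0 < softmax s y :=
  div_pos (Real.exp_pos _) (sum_exp_pos s)

lemma sum_softmax [Nonempty Y] (s : Y → ℝ) : ∑ y, softmax s y = 1 := by
  simp only [softmax]
  rw [← sum_div, div_self (sum_exp_pos s).ne']

lemma softmax_mul_softmax_neg (s : Y → ℝ) (y y' : Y) :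
    softmax s y * softmax (-s) y' =
      Real.exp (s y - s y') / ((∑ z, Real.exp (s z)) * ∑ z, Real.exp (-s z)) := by
  simp only [softmax, Pi.neg_apply, sub_eq_add_neg, Real.exp_add]
  rw [div_mul_div_comm]

end Softmax

lemma sigmoid_eq_exp_half_div (t : ℝ) :
    sigmoid t = Real.exp (t / 2) / (Real.exp (t / 2) + Real.exp (-t / 2)) := by
  have h : Real.exp (-t / 2) = Real.exp (t / 2) * Real.exp (-t) := by
    rw [← Real.exp_add]; ring_nf
  rw [sigmoid, h, ← mul_one_add, div_mul_cancel_left₀ (Real.exp_pos _).ne', one_div]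

lemma mul_softmax_half_pref_eq_sigmoid {Y : Type*} [Fintype Y] [Nonempty Y] (r : Y → ℝ)
    {c : ℝ} (hc : 0 < c) (y y' : Y) :
    c * softmax (fun z => r z / 2) y * softmax (-fun z => r z / 2) y' /
        (c * softmax (fun z => r z / 2) y * softmax (-fun z => r z / 2) y' +
          c * softmax (fun z => r z / 2) y' * softmax (-fun z => r z / 2) y) =
      sigmoid (r y - r y') := by
  set K := (∑ z, Real.exp (r z / 2)) * ∑ z, Real.exp (-(r z / 2))
  have hQ : ∀ a b, c * softmax (fun z => r z / 2) a * softmax (-fun z => r z / 2) b =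
      c / K * Real.exp ((r a - r b) / 2) := by
    intro a b
    rw [mul_assoc, softmax_mul_softmax_neg, ← sub_div]
    ring
  have hK : 0 < c / K :=
    div_pos hc (mul_pos (sum_exp_pos fun z => r z / 2) (sum_exp_pos fun z => -(r z / 2)))
  rw [hQ, hQ, ← mul_add, mul_div_mul_left _ _ hK.ne', sigmoid_eq_exp_half_div, neg_sub]

lemma sum_sum_sum_mul_eq_one {X Y : Type*} [Fintype X] [Fintype Y] {QX : X → ℝ}
    {qplus qminus : X → Y → ℝ} (hX : ∑ x, QX x = 1) (hplus : ∀ x, ∑ y, qplus x y = 1)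
    (hminus : ∀ x, ∑ y, qminus x y = 1) :
    ∑ x, ∑ y, ∑ y', QX x * qplus x y * qminus x y' = 1 := by
  simp_rw [← mul_sum, hminus, mul_one, ← mul_sum, hplus, mul_one, hX]

lemma sum_inv_card (X : Type*) [Fintype X] [Nonempty X] :
    ∑ _x : X, (Fintype.card X : ℝ)⁻¹ = 1 := by
  rw [sum_const, card_univ, nsmul_eq_mul]
  exact mul_inv_cancel₀ (Nat.cast_ne_zero.mpr Fintype.card_ne_zero)

theorem stmt_3_general {X Y : Type*} [Fintype X] [Fintype Y] [Nonempty X] [Nonempty Y]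
    (P : X → Y → Y → ℝ)
    (hrep : ∃ r : X → Y → ℝ, ∀ x : X, ∀ y y' : Y, y ≠ y' → 0 < P x y y' + P x y' y →
        P x y y' / (P x y y' + P x y' y) = sigmoid (r x y - r x y')) :
    ∃ (Q : X → Y → Y → ℝ) (QX : X → ℝ) (qplus qminus : X → Y → ℝ),
      (∀ x y y', 0 ≤ Q x y y') ∧ (∑ x, ∑ y, ∑ y', Q x y y' = 1) ∧
      (∀ x, 0 ≤ QX x) ∧ (∑ x, QX x = 1) ∧
      (∀ x y, 0 < qplus x y) ∧ (∀ x y, 0 < qminus x y) ∧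
      (∀ x, ∑ y, qplus x y = 1) ∧ (∀ x, ∑ y, qminus x y = 1) ∧
      (∀ x yp ym, Q x yp ym = QX x * qplus x yp * qminus x ym) ∧
      (∀ x : X, ∀ y y' : Y, y ≠ y' → 0 < P x y y' + P x y' y →
        Q x y y' / (Q x y y' + Q x y' y) = P x y y' / (P x y y' + P x y' y)) := by
  obtain ⟨r, hr⟩ := hrep
  set QX : X → ℝ := fun _ => (Fintype.card X : ℝ)⁻¹
  set qplus : X → Y → ℝ := fun x => softmax fun z => r x z / 2
  set qminus : X → Y → ℝ := fun x => softmax (-fun z => r x z / 2)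
  have hQX : ∀ x, 0 < QX x := fun _ => by positivity
  refine ⟨fun x yp ym => QX x * qplus x yp * qminus x ym, QX, qplus, qminus,
    fun x y y' => (mul_pos (mul_pos (hQX x) (softmax_pos _ _)) (softmax_pos _ _)).le,
    sum_sum_sum_mul_eq_one (sum_inv_card X) (fun _ => sum_softmax _) (fun _ => sum_softmax _),
    fun x => (hQX x).le, sum_inv_card X, fun _ => softmax_pos _, fun _ => softmax_pos _,
    fun _ => sum_softmax _, fun _ => sum_softmax _, fun _ _ _ => rfl, ?_⟩
  intro x y y' hne hpos
  rw [hr x y y' hne hpos]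
  exact mul_softmax_half_pref_eq_sigmoid (r x) (hQX x) y y'

/-- If the CPRD ω_P is representable by a Bradley–Terry model, then there exists a distribution
Q on 𝒳 × 𝒴 × 𝒴 satisfying positive–negative conditional independence with strictly positive
conditionals whose CPRD agrees with that of P on the support of the comparison distribution. -/
theorem stmt_3 {X Y : Type*} [Fintype X] [Fintype Y] [Nonempty X] [Nonempty Y]
    (P : X → Y → Y → ℝ)
    (hP0 : ∀ x y y', 0 ≤ P x y y')
    (hP1 : ∑ x, ∑ y, ∑ y', P x y y' = 1)
    (hrep : ∃ r : X → Y → ℝ, ∀ x : X, ∀ y y' : Y, y ≠ y' → 0 < P x y y' + P x y' y →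
        P x y y' / (P x y y' + P x y' y) = sigmoid (r x y - r x y')) :
    ∃ (Q : X → Y → Y → ℝ) (QX : X → ℝ) (qplus qminus : X → Y → ℝ),
      (∀ x y y', 0 ≤ Q x y y') ∧ (∑ x, ∑ y, ∑ y', Q x y y' = 1) ∧
      (∀ x, 0 ≤ QX x) ∧ (∑ x, QX x = 1) ∧
      (∀ x y, 0 < qplus x y) ∧ (∀ x y, 0 < qminus x y) ∧
      (∀ x, ∑ y, qplus x y = 1) ∧ (∀ x, ∑ y, qminus x y = 1) ∧
      (∀ x yp ym, Q x yp ym = QX x * qplus x yp * qminus x ym) ∧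
      (∀ x : X, ∀ y y' : Y, y ≠ y' → 0 < P x y y' + P x y' y →
        Q x y y' / (Q x y y' + Q x y' y) = P x y y' / (P x y y' + P x y' y)) :=
  stmt_3_general P hrep
end

section
/- There exists a constant C ∈ ℝ depending only on P (not on r) such that for every score function r : 𝒳 × 𝒴 → ℝ, the population BT objective decomposes as L_BT(r) = C + Z · Σ over all (x, {y,y'}) with P̃(x,{y,y'}) > 0 of P̃(x,{y,y'}) · d(ω_P(y ≻ y' | x), σ(r(x,y) − r(x,y'))), where d(p,q) is the KL divergence between Bernoulli(p) and Bernoulli(q). -/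
open scoped BigOperators

/-- The population Bradley–Terry objective. -/
noncomputable def LBT {X Y : Type*} [Fintype X] [Fintype Y]
    (P : X → Y → Y → ℝ) (r : X → Y → ℝ) : ℝ :=
  -∑ x, ∑ y, ∑ y', P x y y' * Real.log (sigmoid (r x y - r x y'))

/-- KL divergence between Bernoulli(p) and Bernoulli(q):
d(p,q) = p log(p/q) + (1−p) log((1−p)/(1−q)), with the convention 0 · log 0 = 0
(in Lean, `Real.log 0 = 0`, so this convention is automatic). -/
noncomputable def klBern (p q : ℝ) : ℝ :=
  p * Real.log (p / q) + (1 - p) * Real.log ((1 - p) / (1 - q))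

/-!
Write ω = P(x,y,y')/(P(x,y,y') + P(x,y',y)). Each ordered triple contributes
−P log σ = −P log ω + P (log ω − log σ) to L_BT; the first part does not depend on r and
gives C. Since 1 − σ(t) = σ(−t), the excess terms of the triples (x,y,y') and (x,y',y)
add up to (P(x,y,y') + P(x,y',y)) · d(ω, σ), and on the diagonal y = y' the excess vanishes
because there ω = σ(0) = 1/2.
-/

open Finset

theorem sigmoid_eq_real_sigmoid (t : ℝ) : sigmoid t = Real.sigmoid t := by
  rw [sigmoid, Real.sigmoid_def, one_div]

theorem mul_log_div_div_eq {c d u : ℝ} (hd : d ≠ 0) (hu : u ≠ 0) :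
    c * Real.log (c / d / u) = c * (Real.log (c / d) - Real.log u) := by
  rcases eq_or_ne c 0 with rfl | hc
  · simp
  · rw [Real.log_div (div_ne_zero hc hd) hu]

theorem mul_klBern_div_add {a b q : ℝ} (ha : 0 ≤ a) (hb : 0 ≤ b) (hq₀ : 0 < q) (hq₁ : q < 1) :
    (a + b) * klBern (a / (a + b)) q
      = a * (Real.log (a / (a + b)) - Real.log q)
        + b * (Real.log (b / (b + a)) - Real.log (1 - q)) := by
  rcases (add_nonneg ha hb).eq_or_lt with hab | hab
  · obtain ⟨rfl, rfl⟩ : a = 0 ∧ b = 0 := ⟨by linarith, by linarith⟩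
    simp
  have hab' : a + b ≠ 0 := hab.ne'
  have hcompl : 1 - a / (a + b) = b / (b + a) := by
    rw [add_comm b a]; field_simp; ring
  rw [klBern, hcompl, ← mul_log_div_div_eq hab' hq₀.ne',
    ← mul_log_div_div_eq (add_comm a b ▸ hab') (sub_pos.2 hq₁).ne', mul_add,
    ← mul_assoc, ← mul_assoc, mul_div_cancel₀ a hab', add_comm b a, mul_div_cancel₀ b hab']

theorem mul_klBern_div_add_sigmoid {a b : ℝ} (ha : 0 ≤ a) (hb : 0 ≤ b) (t : ℝ) :
    (a + b) * klBern (a / (a + b)) (sigmoid t)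
      = a * (Real.log (a / (a + b)) - Real.log (sigmoid t))
        + b * (Real.log (b / (b + a)) - Real.log (sigmoid (-t))) := by
  simp only [sigmoid_eq_real_sigmoid, Real.sigmoid_neg]
  exact mul_klBern_div_add ha hb (Real.sigmoid_pos t) (Real.sigmoid_lt_one t)

theorem mul_log_div_self_add_self_sub_log_sigmoid_zero (a : ℝ) :
    a * (Real.log (a / (a + a)) - Real.log (sigmoid 0)) = 0 := by
  rcases eq_or_ne a 0 with rfl | ha
  · simp
  · rw [sigmoid_eq_real_sigmoid, Real.sigmoid_zero, ← two_mul, div_mul_cancel_right₀ ha, sub_self,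
      mul_zero]

theorem Finset.sum_sum_add_swap {ι M : Type*} [AddCommMonoid M] (s : Finset ι) (g : ι → ι → M) :
    ∑ i ∈ s, ∑ j ∈ s, (g i j + g j i) = 2 • ∑ i ∈ s, ∑ j ∈ s, g i j := by
  simp only [two_nsmul, sum_add_distrib]
  rw [sum_comm (f := fun i j => g j i)]

theorem stmt_5_general {X Y : Type*} [Fintype X] [Fintype Y] [DecidableEq Y]
    (P : X → Y → Y → ℝ)
    (hP0 : ∀ x y y', 0 ≤ P x y y') :
    ∃ C : ℝ, ∀ r : X → Y → ℝ,
      LBT P r = C + (1 / 2) * ∑ x, ∑ y, ∑ y',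
        if y ≠ y' then
          (P x y y' + P x y' y) *
            klBern (P x y y' / (P x y y' + P x y' y)) (sigmoid (r x y - r x y'))
        else 0 := by
  refine ⟨-∑ x, ∑ y, ∑ y', P x y y' * Real.log (P x y y' / (P x y y' + P x y' y)), fun r => ?_⟩
  set g : X → Y → Y → ℝ := fun x y y' =>
    P x y y' * (Real.log (P x y y' / (P x y y' + P x y' y)) - Real.log (sigmoid (r x y - r x y')))
  have hLBT : LBT P r = -∑ x, ∑ y, ∑ y', P x y y' * Real.log (P x y y' / (P x y y' + P x y' y))
      + ∑ x, ∑ y, ∑ y', g x y y' := by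
    simp only [LBT, g, mul_sub, sum_sub_distrib]
    ring
  have hsymm : ∀ x y y', (if y ≠ y' then (P x y y' + P x y' y) *
      klBern (P x y y' / (P x y y' + P x y' y)) (sigmoid (r x y - r x y')) else 0)
      = g x y y' + g x y' y := by
    intro x y y'
    split_ifs with h
    · rw [mul_klBern_div_add_sigmoid (hP0 x y y') (hP0 x y' y), neg_sub]
    · cases not_not.1 h
      simp only [g, sub_self, mul_log_div_self_add_self_sub_log_sigmoid_zero, add_zero]
  simp only [hLBT, hsymm, sum_sum_add_swap, nsmul_eq_mul, ← mul_sum]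
  ring

/-- There is a constant C depending only on P such that the population BT objective
decomposes as L_BT(r) = C + Z · Σ_{(x,{y,y'})} P̃(x,{y,y'}) · d(ω_P(y ≻ y'|x), σ(r(x,y)−r(x,y'))).
Here Z · P̃(x,{y,y'}) = P(x,y,y') + P(x,y',y), and the sum over unordered pairs {y,y'} of
distinct responses is written as one half of the sum over ordered pairs with y ≠ y'
(the summand being symmetric in (y,y')); terms with P̃(x,{y,y'}) = 0 vanish. -/
theorem stmt_5 {X Y : Type*} [Fintype X] [Fintype Y] [DecidableEq Y]
    [Nonempty X] [Nonempty Y]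
    (P : X → Y → Y → ℝ)
    (hP0 : ∀ x y y', 0 ≤ P x y y')
    (hP1 : ∑ x, ∑ y, ∑ y', P x y y' = 1) :
    ∃ C : ℝ, ∀ r : X → Y → ℝ,
      LBT P r = C + (1 / 2) * ∑ x, ∑ y, ∑ y',
        if y ≠ y' then
          (P x y y' + P x y' y) *
            klBern (P x y y' / (P x y y' + P x y' y)) (sigmoid (r x y - r x y'))
        else 0 :=
  stmt_5_general P hP0
end

section
/- For any score functions r, r* : 𝒳 × 𝒴 → ℝ and any k > 0, the accuracy satisfies Acc_Q(r) ≥ Pr_{Q_pair}( |Δ_{r*}(x,y,y')| ≥ k ) − (1/k²)·E_{Q_pair}[ (Δ_r(x,y,y') − Δ_{r*}(x,y,y'))² ]. -/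
open scoped BigOperators

/-- Probability of an event under Q_pair, where x ∼ Q_x and y, y' are i.i.d. from Q_y(·|x). -/
noncomputable def prQpair {X Y : Type*} [Fintype X] [Fintype Y]
    (Qx : X → ℝ) (Qy : X → Y → ℝ) (E : X → Y → Y → Prop) [∀ x y y', Decidable (E x y y')] : ℝ :=
  ∑ x, ∑ y, ∑ y', Qx x * Qy x y * Qy x y' * (if E x y y' then 1 else 0)

/-- Expectation under Q_pair, where x ∼ Q_x and y, y' are i.i.d. from Q_y(·|x). -/
noncomputable def eQpair {X Y : Type*} [Fintype X] [Fintype Y]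
    (Qx : X → ℝ) (Qy : X → Y → ℝ) (f : X → Y → Y → ℝ) : ℝ :=
  ∑ x, ∑ y, ∑ y', Qx x * Qy x y * Qy x y' * f x y y'

/-!
The margin `Δ_r` has the sign of `Δ_{r*}` unless it has moved by at least `|Δ_{r*}|`.
Hence, pointwise, `1{k ≤ |Δ_{r*}|} - (Δ_r - Δ_{r*})² / k² ≤ 1{sign Δ_r = sign Δ_{r*}}`
(a pointwise Chebyshev inequality), and integrating against `Q_pair` gives the bound.
-/

theorem Real.abs_le_abs_sub_of_sign_ne {a b : ℝ} (h : Real.sign a ≠ Real.sign b) :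
    |b| ≤ |a - b| := by
  rcases lt_trichotomy b 0 with hb | rfl | hb
  · have ha : 0 ≤ a := by
      by_contra! ha
      exact h (by rw [Real.sign_of_neg ha, Real.sign_of_neg hb])
    rw [abs_of_neg hb, abs_of_nonneg (by linarith)]
    linarith
  · simp
  · have ha : a ≤ 0 := by
      by_contra! ha
      exact h (by rw [Real.sign_of_pos ha, Real.sign_of_pos hb])
    rw [abs_of_pos hb, abs_of_nonpos (by linarith)]
    linarith

theorem indicator_sub_div_sq_le_indicator_sign_eq (a b : ℝ) {k : ℝ} (hk : 0 < k) :
    (if k ≤ |b| then (1 : ℝ) else 0) - 1 / k ^ 2 * (a - b) ^ 2 ≤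
      if Real.sign a = Real.sign b then 1 else 0 := by
  have hpen : 0 ≤ 1 / k ^ 2 * (a - b) ^ 2 := by positivity
  by_cases hsign : Real.sign a = Real.sign b
  · rw [if_pos hsign]
    split_ifs <;> linarith
  rw [if_neg hsign]
  split_ifs with hb
  · have hk_le : k ≤ |a - b| := hb.trans (Real.abs_le_abs_sub_of_sign_ne hsign)
    have hsq : k ^ 2 ≤ (a - b) ^ 2 := by
      rw [← sq_abs (a - b)]
      exact pow_le_pow_left₀ hk.le hk_le 2
    rw [one_div_mul_eq_div, sub_nonpos, one_le_div (by positivity)]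
    exact hsq
  · linarith

section eQpair

variable {X Y : Type*} [Fintype X] [Fintype Y] (Qx : X → ℝ) (Qy : X → Y → ℝ)

theorem prQpair_eq_eQpair (E : X → Y → Y → Prop) [∀ x y y', Decidable (E x y y')] :
    prQpair Qx Qy E = eQpair Qx Qy (fun x y y' => if E x y y' then 1 else 0) :=
  rfl

theorem eQpair_sub (f g : X → Y → Y → ℝ) :
    eQpair Qx Qy (fun x y y' => f x y y' - g x y y') = eQpair Qx Qy f - eQpair Qx Qy g := by
  simp only [eQpair, mul_sub, Finset.sum_sub_distrib]

theorem eQpair_const_mul (c : ℝ) (f : X → Y → Y → ℝ) :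
    eQpair Qx Qy (fun x y y' => c * f x y y') = c * eQpair Qx Qy f := by
  simp only [eQpair, Finset.mul_sum]
  refine Finset.sum_congr rfl fun _ _ => Finset.sum_congr rfl fun _ _ =>
    Finset.sum_congr rfl fun _ _ => by ring

variable {Qx Qy}

theorem eQpair_mono (hQx : ∀ x, 0 ≤ Qx x) (hQy : ∀ x y, 0 ≤ Qy x y) {f g : X → Y → Y → ℝ}
    (hfg : ∀ x y y', f x y y' ≤ g x y y') : eQpair Qx Qy f ≤ eQpair Qx Qy g :=
  Finset.sum_le_sum fun x _ => Finset.sum_le_sum fun y _ => Finset.sum_le_sum fun y' _ =>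
    mul_le_mul_of_nonneg_left (hfg x y y') <|
      mul_nonneg (mul_nonneg (hQx x) (hQy x y)) (hQy x y')

end eQpair

theorem stmt_9_general {X Y : Type*} [Fintype X] [Fintype Y]
    (Qx : X → ℝ) (Qy : X → Y → ℝ)
    (hQx0 : ∀ x, 0 ≤ Qx x)
    (hQy0 : ∀ x y, 0 ≤ Qy x y)
    (r rstar : X → Y → ℝ) (k : ℝ) (hk : 0 < k) :
    prQpair Qx Qy (fun x y y' =>
        Real.sign (r x y - r x y') = Real.sign (rstar x y - rstar x y')) ≥
      prQpair Qx Qy (fun x y y' => k ≤ |rstar x y - rstar x y'|) -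
        (1 / k ^ 2) *
          eQpair Qx Qy (fun x y y' =>
            ((r x y - r x y') - (rstar x y - rstar x y')) ^ 2) := by
  rw [ge_iff_le, prQpair_eq_eQpair, prQpair_eq_eQpair, ← eQpair_const_mul, ← eQpair_sub]
  exact eQpair_mono hQx0 hQy0 fun x y y' =>
    indicator_sub_div_sq_le_indicator_sign_eq (r x y - r x y') (rstar x y - rstar x y') hk

/-- Accuracy bound with a margin level k:
Acc_Q(r) ≥ Pr_{Q_pair}( |Δ_{r*}| ≥ k ) − (1/k²) · E_{Q_pair}[ (Δ_r − Δ_{r*})² ]. -/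
theorem stmt_9 {X Y : Type*} [Fintype X] [Fintype Y] [Nonempty X] [Nonempty Y]
    (Qx : X → ℝ) (Qy : X → Y → ℝ)
    (hQx0 : ∀ x, 0 ≤ Qx x) (hQx1 : ∑ x, Qx x = 1)
    (hQy0 : ∀ x y, 0 ≤ Qy x y) (hQy1 : ∀ x, ∑ y, Qy x y = 1)
    (r rstar : X → Y → ℝ) (k : ℝ) (hk : 0 < k) :
    prQpair Qx Qy (fun x y y' =>
        Real.sign (r x y - r x y') = Real.sign (rstar x y - rstar x y')) ≥
      prQpair Qx Qy (fun x y y' => k ≤ |rstar x y - rstar x y'|) -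
        (1 / k ^ 2) *
          eQpair Qx Qy (fun x y y' =>
            ((r x y - r x y') - (rstar x y - rstar x y')) ^ 2) :=
  stmt_9_general Qx Qy hQx0 hQy0 r rstar k hk
end

section
/- Let 𝒳, 𝒴 be finite nonempty sets, φ : 𝒳 × 𝒴 → ℝ^d a feature map, Q a distribution on 𝒳 × 𝒴 whose features are conditionally centered, i.e., E_{y∼Q_y(·|x)}[φ(x,y)] = 0 for every x with Q_x(x) > 0, and P a probability mass function on 𝒳 × 𝒴 × 𝒴 with comparison distribution P̃. Define Σ_P = E_{(x,{y,y'})∼P̃}[ (φ(x,y) − φ(x,y'))(φ(x,y) − φ(x,y'))ᵀ ] and Σ_Q = E_{(x,y)∼Q}[ φ(x,y)φ(x,y)ᵀ ], and assume Σ_Q is positive definite. Then for the linear hypothesis class ℋ = { (x,y) ↦ wᵀφ(x,y) : w ∈ ℝ^d }, the connectivity degree satisfies λ_conn(P, Q; ℋ) = inf over nonzero w ∈ ℝ^d of (wᵀΣ_P w)/(wᵀΣ_Q w) = λ_min( Σ_Q^{−1/2} Σ_P Σ_Q^{−1/2} ), the smallest eigenvalue of the symmetric matrix Σ_Q^{−1/2}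 Σ_P Σ_Q^{−1/2}. -/
open scoped BigOperators
open Matrix
open Classical

/-- The eigenvalues of a real symmetric matrix, listed with multiplicity in
nondecreasing order (the empty list if the matrix is not Hermitian). -/
noncomputable def sortedEigenvalues {d : ℕ} (A : Matrix (Fin d) (Fin d) ℝ) : List ℝ :=
  if h : A.IsHermitian then (Finset.univ.val.map h.eigenvalues).sort (· ≤ ·) else []

/-- Normalizing constant Z of the comparison distribution P̃. -/
noncomputable def Zconst {X Y : Type*} [Fintype X] [Fintype Y] [DecidableEq Y]
    (P : X → Y → Y → ℝ) : ℝ :=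
  (∑ x, ∑ y, ∑ y', if y ≠ y' then P x y y' + P x y' y else 0) / 2

/-- Expectation under the comparison distribution P̃ of a symmetric function of (x,{y,y'}). -/
noncomputable def ePt {X Y : Type*} [Fintype X] [Fintype Y] [DecidableEq Y]
    (P : X → Y → Y → ℝ) (f : X → Y → Y → ℝ) : ℝ :=
  (∑ x, ∑ y, ∑ y', if y ≠ y' then (P x y y' + P x y' y) * f x y y' else 0) /
    (2 * Zconst P)

/-- Ṽar_Q(r) = E_{x∼Q_x}[ Var_{y∼Q_y(·|x)}[ r(x,y) ] ]. -/
noncomputable def tVar {X Y : Type*} [Fintype X] [Fintype Y]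
    (Qx : X → ℝ) (Qy : X → Y → ℝ) (r : X → Y → ℝ) : ℝ :=
  ∑ x, Qx x * ((∑ y, Qy x y * (r x y) ^ 2) - (∑ y, Qy x y * r x y) ^ 2)

/-- The positive semidefinite square root of a positive semidefinite matrix
(the definition of `Matrix.PosSemidef.sqrt` in the older Mathlib, since removed). -/
noncomputable def posSemidefSqrt {d : ℕ} {A : Matrix (Fin d) (Fin d) ℝ} (hA : A.PosSemidef) :
    Matrix (Fin d) (Fin d) ℝ :=
  hA.1.eigenvectorUnitary.1 * diagonal ((↑) ∘ (√·) ∘ hA.1.eigenvalues) *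
    (star hA.1.eigenvectorUnitary : Matrix (Fin d) (Fin d) ℝ)

/-!
For a linear score `r = wᵀφ`, both ingredients of the connectivity ratio are quadratic forms in
`w`: the `P̃`-expectation of the squared margin is `wᵀ Σ_P w` because `Σ_P` is the Gram matrix of
the feature differences, and, since the features are conditionally centered, the expected
conditional variance is the second moment `wᵀ Σ_Q w`. Hence `λ_conn` is the infimum of the
generalized Rayleigh quotient of `(Σ_P, Σ_Q)`. Substituting `w = Σ_Q^{-1/2} u` turns it into the
ordinary Rayleigh quotient of the symmetric matrix `Σ_Q^{-1/2} Σ_P Σ_Q^{-1/2}`, which is bounded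
below by the smallest eigenvalue and attains it at a corresponding eigenvector.
-/

theorem LinearMap.map_sq_sum_smul {A ι : Type*} [CommRing A] [Algebra ℝ A] [Fintype ι]
    (L : A →ₗ[ℝ] ℝ) (ψ : ι → A) (w : ι → ℝ) :
    L ((∑ a, w a • ψ a) ^ 2) = w ⬝ᵥ (Matrix.of fun a b => L (ψ a * ψ b)) *ᵥ w := by
  rw [sq, Finset.sum_mul_sum]
  simp only [smul_mul_smul_comm, map_sum, map_smul, smul_eq_mul, dotProduct, mulVec, of_apply,
    Finset.mul_sum]
  exact Finset.sum_congr rfl fun a _ => Finset.sum_congr rfl fun b _ => by ring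

namespace Matrix

variable {n : Type*} [Fintype n]

theorem IsHermitian.le_dotProduct_mulVec [DecidableEq n] {M : Matrix n n ℝ} (hM : M.IsHermitian)
    {c : ℝ} (hc : ∀ i, c ≤ hM.eigenvalues i) (u : n → ℝ) :
    c * (u ⬝ᵥ u) ≤ u ⬝ᵥ M *ᵥ u := by
  have hpsd : (M - algebraMap ℝ _ c).PosSemidef := by
    rw [posSemidef_iff_isHermitian_and_spectrum_nonneg]
    refine ⟨hM.sub (IsSelfAdjoint.algebraMap _ (.all c)), ?_⟩
    rw [← spectrum.sub_singleton_eq, hM.spectrum_real_eq_range_eigenvalues]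
    rintro _ ⟨_, ⟨i, rfl⟩, _, rfl, rfl⟩
    simpa using hc i
  simpa [sub_mulVec, Algebra.algebraMap_eq_smul_one, smul_mulVec, dotProduct_sub]
    using hpsd.dotProduct_mulVec_nonneg u

def rayleighQuotients (A B : Matrix n n ℝ) : Set ℝ :=
  {v | ∃ w : n → ℝ, w ≠ 0 ∧ v = (w ⬝ᵥ A *ᵥ w) / (w ⬝ᵥ B *ᵥ w)}

theorem dotProduct_transpose_mul_mul_mulVec (A T : Matrix n n ℝ) (w : n → ℝ) :
    w ⬝ᵥ (Tᵀ * A * T) *ᵥ w = (T *ᵥ w) ⬝ᵥ A *ᵥ (T *ᵥ w) := by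
  rw [← mulVec_mulVec, ← mulVec_mulVec, dotProduct_mulVec, vecMul_transpose]

theorem rayleighQuotients_transpose_mul_mul [DecidableEq n] (A B : Matrix n n ℝ)
    {T : Matrix n n ℝ} (hT : IsUnit T) :
    rayleighQuotients (Tᵀ * A * T) (Tᵀ * B * T) = rayleighQuotients A B := by
  ext v
  simp only [rayleighQuotients, Set.mem_ofPred_eq, dotProduct_transpose_mul_mul_mulVec]
  constructor
  · rintro ⟨w, hw, rfl⟩
    refine ⟨T *ᵥ w, fun h => hw ?_, rfl⟩
    exact mulVec_injective_iff_isUnit.mpr hT (by rw [h, mulVec_zero])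
  · rintro ⟨u, hu, rfl⟩
    obtain ⟨w, rfl⟩ := mulVec_surjective_iff_isUnit.mpr hT u
    exact ⟨w, fun h => hu (by rw [h, mulVec_zero]), rfl⟩

theorem rayleighQuotients_mul_self [DecidableEq n] (A : Matrix n n ℝ) {S : Matrix n n ℝ}
    (hS : Sᵀ = S) (hSu : IsUnit S) :
    rayleighQuotients A (S * S) = rayleighQuotients (S⁻¹ * A * S⁻¹) 1 := by
  have hdet : IsUnit S.det := (isUnit_iff_isUnit_det S).mp hSu
  have hT : (S⁻¹)ᵀ = S⁻¹ := by rw [transpose_nonsing_inv, hS]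
  have h1 : (S⁻¹)ᵀ * (S * S) * S⁻¹ = 1 := by
    rw [hT, ← mul_assoc, nonsing_inv_mul _ hdet, one_mul, mul_nonsing_inv _ hdet]
  rw [← rayleighQuotients_transpose_mul_mul A (S * S) (isUnit_nonsing_inv_iff.mpr hSu), h1,
    hT]

theorem IsHermitian.eigenvalues_mem_rayleighQuotients [DecidableEq n] {M : Matrix n n ℝ}
    (hM : M.IsHermitian) (i : n) : hM.eigenvalues i ∈ rayleighQuotients M 1 := by
  have hv : (hM.eigenvectorBasis i : n → ℝ) ≠ 0 := by
    simpa using hM.eigenvectorBasis.orthonormal.ne_zero i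
  refine ⟨_, hv, ?_⟩
  rw [one_mulVec, hM.mulVec_eigenvectorBasis, dotProduct_smul, smul_eq_mul,
    mul_div_cancel_right₀ _ (by simpa using hv)]

theorem IsHermitian.isLeast_rayleighQuotients [DecidableEq n] {M : Matrix n n ℝ}
    (hM : M.IsHermitian) {c : ℝ} (hc : IsLeast (Set.range hM.eigenvalues) c) :
    IsLeast (rayleighQuotients M 1) c := by
  obtain ⟨⟨i, rfl⟩, hle⟩ := hc
  refine ⟨hM.eigenvalues_mem_rayleighQuotients i, ?_⟩
  rintro _ ⟨u, hu, rfl⟩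
  rw [one_mulVec, le_div_iff₀ (by simpa using dotProduct_star_self_pos_iff.mpr hu)]
  exact hM.le_dotProduct_mulVec (fun j => hle ⟨j, rfl⟩) u

end Matrix

theorem Multiset.isLeast_sort_getD_zero {α : Type*} [LinearOrder α] {s : Multiset α} (hs : s ≠ 0)
    (b : α) :
    IsLeast {x | x ∈ s} ((s.sort (· ≤ ·)).getD 0 b) := by
  have hsort : ∀ x, x ∈ s.sort (· ≤ ·) ↔ x ∈ s := fun x => Multiset.mem_sort _
  rcases hl : s.sort (· ≤ ·) with _ | ⟨a, t⟩
  · simp_all [List.eq_nil_iff_forall_not_mem, Multiset.eq_zero_iff_forall_notMem]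
  · have hpw := Multiset.pairwise_sort s (· ≤ ·)
    rw [hl, List.pairwise_cons] at hpw
    rw [hl] at hsort
    refine ⟨(hsort a).mp List.mem_cons_self, fun x hx => ?_⟩
    rcases List.mem_cons.mp ((hsort x).mpr hx) with rfl | hxt
    · exact le_rfl
    · exact hpw.1 x hxt

theorem sInf_rayleighQuotients_eq_sortedEigenvalues {d : ℕ} {M : Matrix (Fin d) (Fin d) ℝ}
    (hM : M.IsHermitian) :
    sInf (Matrix.rayleighQuotients M 1) = (sortedEigenvalues M).getD 0 0 := by
  rcases Nat.eq_zero_or_pos d with rfl | hd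
  · -- both sides are junk values: `sInf ∅ = 0` and the default of `getD`
    have : Matrix.rayleighQuotients M 1 = ∅ :=
      Set.eq_empty_of_forall_notMem fun _ ⟨w, hw, _⟩ => hw (Subsingleton.elim _ _)
    simp [this, sortedEigenvalues]
  · have hs : Finset.univ.val.map hM.eigenvalues ≠ 0 := by
      simp only [Fin.univ_val_map, ne_eq, Multiset.coe_eq_zero, List.ofFn_eq_nil_iff]
      omega
    rw [sortedEigenvalues, dif_pos hM]
    refine (hM.isLeast_rayleighQuotients ?_).csInf_eq
    simpa [Set.range] using Multiset.isLeast_sort_getD_zero hs 0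

section posSemidefSqrt

variable {d : ℕ} {A : Matrix (Fin d) (Fin d) ℝ}

theorem posSemidefSqrt_mul_self (hA : A.PosSemidef) :
    posSemidefSqrt hA * posSemidefSqrt hA = A := by
  set U : Matrix (Fin d) (Fin d) ℝ := hA.1.eigenvectorUnitary.1
  have hUU : star U * U = 1 := Unitary.coe_star_mul_self _
  set D : Matrix (Fin d) (Fin d) ℝ := diagonal ((↑) ∘ (√·) ∘ hA.1.eigenvalues)
  have hD : D * D = diagonal (RCLike.ofReal ∘ hA.1.eigenvalues) := by
    rw [diagonal_mul_diagonal]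
    congr 1
    funext i
    simp [Real.mul_self_sqrt (hA.eigenvalues_nonneg i)]
  conv_rhs => rw [hA.1.spectral_theorem, Unitary.conjStarAlgAut_apply, ← hD]
  simp only [posSemidefSqrt, mul_assoc]
  rw [← mul_assoc (star U), hUU, one_mul]

theorem transpose_posSemidefSqrt (hA : A.PosSemidef) :
    (posSemidefSqrt hA)ᵀ = posSemidefSqrt hA := by
  rw [← conjTranspose_eq_transpose_of_trivial]
  exact isHermitian_mul_mul_conjTranspose _ (isHermitian_diagonal _)

theorem isUnit_posSemidefSqrt (hA : A.PosDef) : IsUnit (posSemidefSqrt hA.posSemidef) := by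
  rw [isUnit_iff_isUnit_det]
  have h := congrArg det (posSemidefSqrt_mul_self hA.posSemidef)
  rw [det_mul] at h
  exact isUnit_of_mul_isUnit_left (h ▸ hA.det_pos.ne'.isUnit)

end posSemidefSqrt

section Comparison

variable {X Y : Type*} [Fintype X] [Fintype Y]

noncomputable def ePtₗ [DecidableEq Y] (P : X → Y → Y → ℝ) : (X → Y → Y → ℝ) →ₗ[ℝ] ℝ where
  toFun := ePt P
  map_add' f g := by
    simp only [ePt, ← add_div, ← Finset.sum_add_distrib, Pi.add_apply, mul_add, ite_add_ite,
      add_zero]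
  map_smul' c f := by
    simp only [ePt, Pi.smul_apply, smul_eq_mul, RingHom.id_apply, mul_div_assoc', Finset.mul_sum,
      mul_ite, mul_zero, mul_left_comm c]

def expectQ (Qx : X → ℝ) (Qy : X → Y → ℝ) : (X → Y → ℝ) →ₗ[ℝ] ℝ where
  toFun r := ∑ x, ∑ y, Qx x * Qy x y * r x y
  map_add' f g := by
    simp only [Pi.add_apply, mul_add, Finset.sum_add_distrib]
  map_smul' c f := by
    simp only [Pi.smul_apply, smul_eq_mul, RingHom.id_apply, Finset.mul_sum, mul_left_comm c]

theorem tVar_eq_expectQ_sq {Qx : X → ℝ} {Qy : X → Y → ℝ} (hQx0 : ∀ x, 0 ≤ Qx x)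
    {r : X → Y → ℝ} (hr : ∀ x, 0 < Qx x → ∑ y, Qy x y * r x y = 0) :
    tVar Qx Qy r = expectQ Qx Qy (r ^ 2) := by
  refine Finset.sum_congr rfl fun x _ => ?_
  rcases (hQx0 x).eq_or_lt with hx | hx
  · simp [← hx]
  · simp [hr x hx, Finset.mul_sum, mul_assoc]

variable {d : ℕ} {φ : X → Y → Fin d → ℝ}

theorem ePt_sq_sub_dotProduct [DecidableEq Y] {P : X → Y → Y → ℝ}
    {SigP : Matrix (Fin d) (Fin d) ℝ}
    (hSigP : ∀ a b, SigP a b =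
      ePt P (fun x y y' => (φ x y a - φ x y' a) * (φ x y b - φ x y' b)))
    (w : Fin d → ℝ) :
    ePt P (fun x y y' => (w ⬝ᵥ φ x y - w ⬝ᵥ φ x y') ^ 2) = w ⬝ᵥ SigP *ᵥ w := by
  have hSigP' : SigP = of fun a b => ePtₗ P ((fun x y y' => φ x y a - φ x y' a) *
      (fun x y y' => φ x y b - φ x y' b)) := by
    ext a b
    exact hSigP a b
  rw [hSigP', ← LinearMap.map_sq_sum_smul]
  congr 1
  funext x y y'
  simp [dotProduct, Finset.sum_apply, mul_sub]

theorem tVar_dotProduct {Qx : X → ℝ} {Qy : X → Y → ℝ} (hQx0 : ∀ x, 0 ≤ Qx x)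
    (hcenter : ∀ x, 0 < Qx x → ∀ a, ∑ y, Qy x y * φ x y a = 0)
    {SigQ : Matrix (Fin d) (Fin d) ℝ}
    (hSigQ : ∀ a b, SigQ a b = ∑ x, ∑ y, Qx x * Qy x y * (φ x y a * φ x y b))
    (w : Fin d → ℝ) :
    tVar Qx Qy (fun x y => w ⬝ᵥ φ x y) = w ⬝ᵥ SigQ *ᵥ w := by
  have hcentered : ∀ x, 0 < Qx x → ∑ y, Qy x y * w ⬝ᵥ φ x y = 0 := by
    intro x hx
    simp only [dotProduct, Finset.mul_sum, mul_left_comm (Qy x _)]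
    rw [Finset.sum_comm]
    simp [← Finset.mul_sum, hcenter x hx]
  have hSigQ' :
      SigQ = of fun a b => expectQ Qx Qy ((fun x y => φ x y a) * fun x y => φ x y b) := by
    ext a b
    exact hSigQ a b
  rw [tVar_eq_expectQ_sq hQx0 hcentered, hSigQ', ← LinearMap.map_sq_sum_smul]
  congr 1
  funext x y
  simp [dotProduct, Finset.sum_apply]

end Comparison

section Connectivity

variable {X Y : Type*} [Fintype X] [Fintype Y] [DecidableEq Y]

def linearScores {d : ℕ} (φ : X → Y → Fin d → ℝ) : Set (X → Y → ℝ) :=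
  {r | ∃ w : Fin d → ℝ, ∀ x y, r x y = w ⬝ᵥ φ x y}

def connectivityRatios (P : X → Y → Y → ℝ) (Qx : X → ℝ) (Qy : X → Y → ℝ)
    (H : Set (X → Y → ℝ)) : Set ℝ :=
  {v | ∃ f ∈ H, ∃ g ∈ H, 0 < tVar Qx Qy (f - g) ∧
    v = ePt P (fun x y y' => ((f x y - f x y') - (g x y - g x y')) ^ 2) / tVar Qx Qy (f - g)}

theorem connectivityRatios_linearScores {d : ℕ} {φ : X → Y → Fin d → ℝ} {P : X → Y → Y → ℝ}
    {Qx : X → ℝ} {Qy : X → Y → ℝ} {SigP SigQ : Matrix (Fin d) (Fin d) ℝ}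
    (hP : ∀ w, ePt P (fun x y y' => (w ⬝ᵥ φ x y - w ⬝ᵥ φ x y') ^ 2) = w ⬝ᵥ SigP *ᵥ w)
    (hQ : ∀ w, tVar Qx Qy (fun x y => w ⬝ᵥ φ x y) = w ⬝ᵥ SigQ *ᵥ w) (hQpd : SigQ.PosDef) :
    connectivityRatios P Qx Qy (linearScores φ) = Matrix.rayleighQuotients SigP SigQ := by
  ext v
  constructor
  · rintro ⟨f, ⟨u, hf⟩, g, ⟨u', hg⟩, hvar, rfl⟩
    have hfg : f - g = fun x y => (u - u') ⬝ᵥ φ x y := by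
      funext x y
      simp [hf, hg, sub_dotProduct]
    rw [hfg, hQ] at hvar ⊢
    refine ⟨u - u', fun h => by simp [h] at hvar, ?_⟩
    rw [← hP]
    congr 2
    funext x y y'
    simp only [hf, hg, sub_dotProduct]
    ring
  · rintro ⟨w, hw, rfl⟩
    refine ⟨_, ⟨w, fun _ _ => rfl⟩, 0, ⟨0, by simp⟩, ?_⟩
    simpa [hQ, hP] using hQpd.dotProduct_mulVec_pos hw

end Connectivity

theorem stmt_19_general {X Y : Type*} [Fintype X] [Fintype Y] [DecidableEq Y]
    (d : ℕ)
    (φ : X → Y → (Fin d → ℝ))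
    (P : X → Y → Y → ℝ)
    (Qx : X → ℝ) (Qy : X → Y → ℝ)
    (hQx0 : ∀ x, 0 ≤ Qx x)
    (hcenter : ∀ x, 0 < Qx x → ∀ a, ∑ y, Qy x y * φ x y a = 0)
    (SigP SigQ : Matrix (Fin d) (Fin d) ℝ)
    (hSigP : ∀ a b, SigP a b =
      ePt P (fun x y y' => (φ x y a - φ x y' a) * (φ x y b - φ x y' b)))
    (hSigQ : ∀ a b, SigQ a b = ∑ x, ∑ y, Qx x * Qy x y * (φ x y a * φ x y b))
    (hQpd : SigQ.PosDef)
    (H : Set (X → Y → ℝ))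
    (hH : H = {r : X → Y → ℝ | ∃ w : Fin d → ℝ, ∀ x y, r x y = w ⬝ᵥ φ x y}) :
    sInf {v : ℝ | ∃ f ∈ H, ∃ g ∈ H, 0 < tVar Qx Qy (f - g) ∧
        v = ePt P (fun x y y' => ((f x y - f x y') - (g x y - g x y')) ^ 2) /
            tVar Qx Qy (f - g)} =
      sInf {v : ℝ | ∃ w : Fin d → ℝ, w ≠ 0 ∧
        v = (w ⬝ᵥ SigP.mulVec w) / (w ⬝ᵥ SigQ.mulVec w)} ∧
    sInf {v : ℝ | ∃ w : Fin d → ℝ, w ≠ 0 ∧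
        v = (w ⬝ᵥ SigP.mulVec w) / (w ⬝ᵥ SigQ.mulVec w)} =
      (sortedEigenvalues
        ((posSemidefSqrt hQpd.posSemidef)⁻¹ * SigP * (posSemidefSqrt hQpd.posSemidef)⁻¹)).getD 0 0 := by
  change sInf (connectivityRatios P Qx Qy H) = sInf (rayleighQuotients SigP SigQ) ∧
    sInf (rayleighQuotients SigP SigQ) = _
  set S := posSemidefSqrt hQpd.posSemidef
  have hSS : S * S = SigQ := posSemidefSqrt_mul_self hQpd.posSemidef
  have hST : Sᵀ = S := transpose_posSemidefSqrt hQpd.posSemidef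
  have hSigP_herm : SigP.IsHermitian := by
    ext a b
    simp only [conjTranspose_apply, star_trivial, hSigP]
    congr 1
    funext x y y'
    ring
  have hM : (S⁻¹ * SigP * S⁻¹).IsHermitian := by
    have h := isHermitian_mul_mul_conjTranspose S⁻¹ hSigP_herm
    rwa [conjTranspose_nonsing_inv, conjTranspose_eq_transpose_of_trivial, hST] at h
  subst hH
  refine ⟨congrArg sInf (connectivityRatios_linearScores (ePt_sq_sub_dotProduct hSigP)
    (tVar_dotProduct hQx0 hcenter hSigQ) hQpd), ?_⟩
  rw [← hSS, rayleighQuotients_mul_self SigP hST (isUnit_posSemidefSqrt hQpd)]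
  exact sInf_rayleighQuotients_eq_sortedEigenvalues hM

/-- Connectivity degree for linear Bradley–Terry: with conditionally centered features and
positive definite Σ_Q, for the linear hypothesis class ℋ = {(x,y) ↦ wᵀφ(x,y)},
λ_conn(P, Q; ℋ) = inf_{w ≠ 0} (wᵀΣ_P w)/(wᵀΣ_Q w) = λ_min(Σ_Q^{−1/2} Σ_P Σ_Q^{−1/2}). -/
theorem stmt_19 {X Y : Type*} [Fintype X] [Fintype Y] [DecidableEq Y]
    [Nonempty X] [Nonempty Y] (d : ℕ)
    (φ : X → Y → (Fin d → ℝ))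
    (P : X → Y → Y → ℝ)
    (hP0 : ∀ x y y', 0 ≤ P x y y')
    (hP1 : ∑ x, ∑ y, ∑ y', P x y y' = 1)
    (hZ : 0 < Zconst P)
    (Qx : X → ℝ) (Qy : X → Y → ℝ)
    (hQx0 : ∀ x, 0 ≤ Qx x) (hQx1 : ∑ x, Qx x = 1)
    (hQy0 : ∀ x y, 0 ≤ Qy x y) (hQy1 : ∀ x, ∑ y, Qy x y = 1)
    (hcenter : ∀ x, 0 < Qx x → ∀ a, ∑ y, Qy x y * φ x y a = 0)
    (SigP SigQ : Matrix (Fin d) (Fin d) ℝ)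
    (hSigP : ∀ a b, SigP a b =
      ePt P (fun x y y' => (φ x y a - φ x y' a) * (φ x y b - φ x y' b)))
    (hSigQ : ∀ a b, SigQ a b = ∑ x, ∑ y, Qx x * Qy x y * (φ x y a * φ x y b))
    (hQpd : SigQ.PosDef)
    (H : Set (X → Y → ℝ))
    (hH : H = {r : X → Y → ℝ | ∃ w : Fin d → ℝ, ∀ x y, r x y = w ⬝ᵥ φ x y}) :
    sInf {v : ℝ | ∃ f ∈ H, ∃ g ∈ H, 0 < tVar Qx Qy (f - g) ∧
        v = ePt P (fun x y y' => ((f x y - f x y') - (g x y - g x y')) ^ 2) /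
            tVar Qx Qy (f - g)} =
      sInf {v : ℝ | ∃ w : Fin d → ℝ, w ≠ 0 ∧
        v = (w ⬝ᵥ SigP.mulVec w) / (w ⬝ᵥ SigQ.mulVec w)} ∧
    sInf {v : ℝ | ∃ w : Fin d → ℝ, w ≠ 0 ∧
        v = (w ⬝ᵥ SigP.mulVec w) / (w ⬝ᵥ SigQ.mulVec w)} =
      (sortedEigenvalues
        ((posSemidefSqrt hQpd.posSemidef)⁻¹ * SigP * (posSemidefSqrt hQpd.posSemidef)⁻¹)).getD 0 0 :=
  stmt_19_general d φ P Qx Qy hQx0 hcenter SigP SigQ hSigP hSigQ hQpd H hH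
end
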